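/- Removing a dominated Left option preserves equality: if G = {A, B, C, …| G^S | D, E, F, …} with A ≥ B, then G' = {A, C, …| G^S | D, E, F, …} satisfies G' = G. -/

import Mathlib

inductive SGame : Type where
  | mk (left right : List SGame) (score : ℝ)

namespace SGame

def leftOpts : SGame → List SGame | mk L _ _ => L
def rightOpts : SGame → List SGame | mk _ R _ => R
def score : SGame → ℝ | mk _ _ s => s

mutual
  /-- Optimal final score when Left moves first. -/
  def leftScore : SGame → ℝ
    | mk [] _ s => s
    | mk (g :: L) _ _ => maxRight g L
  termination_by G => sizeOf G
  decreasing_by all_goals (simp; try omega)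
  def maxRight : SGame → List SGame → ℝ
    | g, [] => rightScore g
    | g, h :: t => max (rightScore g) (maxRight h t)
  termination_by g l => 1 + sizeOf g + sizeOf l
  decreasing_by all_goals (simp; try omega)
  /-- Optimal final score when Right moves first. -/
  def rightScore : SGame → ℝ
    | mk _ [] s => s
    | mk _ (g :: R) _ => minLeft g R
  termination_by G => sizeOf G
  decreasing_by all_goals (simp; try omega)
  def minLeft : SGame → List SGame → ℝ
    | g, [] => leftScore g
    | g, h :: t => min (leftScore g) (minLeft h t)
  termination_by g l => 1 + sizeOf g + sizeOf l
  decreasing_by all_goals (simp; try omega)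
end

/-- Long-rule disjunctive sum. -/
def sum : SGame → SGame → SGame
  | mk L1 R1 s1, mk L2 R2 s2 =>
    mk ((L1.attach.map fun g => sum g.1 (mk L2 R2 s2)) ++
        (L2.attach.map fun h => sum (mk L1 R1 s1) h.1))
       ((R1.attach.map fun g => sum g.1 (mk L2 R2 s2)) ++
        (R2.attach.map fun h => sum (mk L1 R1 s1) h.1))
       (s1 + s2)
termination_by G H => sizeOf G + sizeOf H
decreasing_by
  all_goals simp
  · have := List.sizeOf_lt_of_mem g.2; omega
  · have := List.sizeOf_lt_of_mem h.2; omega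
  · have := List.sizeOf_lt_of_mem g.2; omega
  · have := List.sizeOf_lt_of_mem h.2; omega

end SGame

namespace SGame

/-- The game `{.|0|.}`. -/
def zero : SGame := mk [] [] 0

/-- Negation: `-G = {-G^R | -G^S | -G^L}`. -/
def neg : SGame → SGame
  | mk L R s =>
    mk (R.attach.map fun g => neg g.1) (L.attach.map fun g => neg g.1) (-s)
termination_by G => sizeOf G
decreasing_by
  all_goals (have := List.sizeOf_lt_of_mem g.2; simp; omega)

/-- Identity of game trees (options regarded as sets). -/
def Ident : SGame → SGame → Prop
  | mk L1 R1 s1, mk L2 R2 s2 =>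
    s1 = s2 ∧
    (∀ g ∈ L1.attach, ∃ h ∈ L2.attach, Ident g.1 h.1) ∧
    (∀ h ∈ L2.attach, ∃ g ∈ L1.attach, Ident g.1 h.1) ∧
    (∀ g ∈ R1.attach, ∃ h ∈ R2.attach, Ident g.1 h.1) ∧
    (∀ h ∈ R2.attach, ∃ g ∈ R1.attach, Ident g.1 h.1)
termination_by G H => sizeOf G + sizeOf H
decreasing_by
  all_goals
    (have := List.sizeOf_lt_of_mem g.2; have := List.sizeOf_lt_of_mem h.2
     simp; omega)

inductive Outcome : Type where
  | L | R | N | P | T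
deriving DecidableEq

/-- The outcome class of a game, determined by the signs of its final scores. -/
noncomputable def outcome (G : SGame) : Outcome :=
  if 0 < G.leftScore then
    (if 0 < G.rightScore then .L else if G.rightScore = 0 then .L else .N)
  else if G.leftScore = 0 then
    (if 0 < G.rightScore then .L else if G.rightScore = 0 then .T else .R)
  else
    (if 0 < G.rightScore then .P else .R)

/-- `G ≥ H`. -/
def Ge (G H : SGame) : Prop :=
  ∀ X : SGame,
    (0 ≤ (H.sum X).leftScore → 0 ≤ (G.sum X).leftScore) ∧
    (0 ≤ (H.sum X).rightScore → 0 ≤ (G.sum X).rightScore) ∧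
    (0 < (H.sum X).leftScore → 0 < (G.sum X).leftScore) ∧
    (0 < (H.sum X).rightScore → 0 < (G.sum X).rightScore)

/-- `G ≤ H`. -/
def Le (G H : SGame) : Prop :=
  ∀ X : SGame,
    ((H.sum X).leftScore ≤ 0 → (G.sum X).leftScore ≤ 0) ∧
    ((H.sum X).rightScore ≤ 0 → (G.sum X).rightScore ≤ 0) ∧
    ((H.sum X).leftScore < 0 → (G.sum X).leftScore < 0) ∧
    ((H.sum X).rightScore < 0 → (G.sum X).rightScore < 0)

/-- Game equality: same outcome in every disjunctive-sum context. -/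
def gameEq (G H : SGame) : Prop :=
  ∀ X : SGame, (G.sum X).outcome = (H.sum X).outcome

end SGame

namespace SGame

/-- Every score in the game tree of `G` satisfies `p`. -/
def AllScores (p : ℝ → Prop) : SGame → Prop
  | mk L R s =>
    p s ∧ (∀ g ∈ L.attach, AllScores p g.1) ∧ (∀ g ∈ R.attach, AllScores p g.1)
termination_by G => sizeOf G
decreasing_by all_goals (have := List.sizeOf_lt_of_mem g.2; simp; omega)

/-- `G ≡ H`: identical underlying game trees, with equal scores at all
termination vertices (vertices at which at least one player has no option,
i.e. where the play of some disjunctive sum can end). -/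
def Equiv : SGame → SGame → Prop
  | mk L1 R1 s1, mk L2 R2 s2 =>
    ((L1 = [] ∨ R1 = []) → s1 = s2) ∧
    (∀ g ∈ L1.attach, ∃ h ∈ L2.attach, Equiv g.1 h.1) ∧
    (∀ h ∈ L2.attach, ∃ g ∈ L1.attach, Equiv g.1 h.1) ∧
    (∀ g ∈ R1.attach, ∃ h ∈ R2.attach, Equiv g.1 h.1) ∧
    (∀ h ∈ R2.attach, ∃ g ∈ R1.attach, Equiv g.1 h.1)
termination_by G H => sizeOf G + sizeOf H
decreasing_by
  all_goals
    (have := List.sizeOf_lt_of_mem g.2; have := List.sizeOf_lt_of_mem h.2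
     simp; omega)

/-- `G` is in canonical form: hereditarily, no dominated and no reversible options. -/
def Canonical : SGame → Prop
  | mk L R s =>
    (∀ A ∈ L, ∀ B ∈ L, A ≠ B → ¬ Ge A B) ∧
    (∀ D ∈ R, ∀ E ∈ R, D ≠ E → ¬ Le D E) ∧
    (∀ A ∈ L, ∀ Ar ∈ A.rightOpts, ¬ Le Ar (mk L R s)) ∧
    (∀ D ∈ R, ∀ Dl ∈ D.leftOpts, ¬ Ge Dl (mk L R s)) ∧
    (∀ g ∈ L.attach, Canonical g.1) ∧ (∀ g ∈ R.attach, Canonical g.1)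
termination_by G => sizeOf G
decreasing_by all_goals (have := List.sizeOf_lt_of_mem g.2; simp; omega)

/-- One reduction step: removing a dominated option or bypassing a reversible
option, at the root or in some subposition. -/
inductive Step : SGame → SGame → Prop where
  | domL {L1 L2 : List SGame} {R : List SGame} {s : ℝ} {B : SGame} (A : SGame)
      (hA : A ∈ L1 ++ L2) (h : Ge A B) :
      Step (mk (L1 ++ B :: L2) R s) (mk (L1 ++ L2) R s)
  | domR {R1 R2 : List SGame} {L : List SGame} {s : ℝ} {E : SGame} (D : SGame)
      (hD : D ∈ R1 ++ R2) (h : Le D E) :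
      Step (mk L (R1 ++ E :: R2) s) (mk L (R1 ++ R2) s)
  | revL {L1 L2 : List SGame} {R : List SGame} {s : ℝ} {A Ar : SGame}
      (hAr : Ar ∈ A.rightOpts) (h : Le Ar (mk (L1 ++ A :: L2) R s)) :
      Step (mk (L1 ++ A :: L2) R s) (mk (L1 ++ Ar.leftOpts ++ L2) R s)
  | revR {R1 R2 : List SGame} {L : List SGame} {s : ℝ} {D Dl : SGame}
      (hDl : Dl ∈ D.leftOpts) (h : Ge Dl (mk L (R1 ++ D :: R2) s)) :
      Step (mk L (R1 ++ D :: R2) s) (mk L (R1 ++ Dl.rightOpts ++ R2) s)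
  | congL {g g' : SGame} {L1 L2 R : List SGame} {s : ℝ} (h : Step g g') :
      Step (mk (L1 ++ g :: L2) R s) (mk (L1 ++ g' :: L2) R s)
  | congR {g g' : SGame} {L R1 R2 : List SGame} {s : ℝ} (h : Step g g') :
      Step (mk L (R1 ++ g :: R2) s) (mk L (R1 ++ g' :: R2) s)

end SGame

/-!
`G ≥ H` and the outcome of a game only see the signs of the Left-first and Right-first scores,
and the sign, being monotone, commutes with the max and min that define these scores. By
induction on the context `X`, a game therefore does not decrease when its list of Left options
is replaced by one dominating every old option (as long as an empty list stays empty). Deleting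
`B` in the presence of `A ≥ B` is such a replacement in both directions, so the two games are
`≥` each other and hence equal.
-/

open SignType

lemma sign_le_sign_iff {x y : ℝ} : sign x ≤ sign y ↔ (0 ≤ x → 0 ≤ y) ∧ (0 < x → 0 < y) := by
  have key : ∀ a b : SignType, a ≤ b ↔ (0 ≤ a → 0 ≤ b) ∧ (a = 1 → b = 1) := by decide
  rw [key, sign_nonneg_iff, sign_nonneg_iff, sign_eq_one_iff, sign_eq_one_iff]

namespace SGame

@[elab_as_elim, induction_eliminator]
theorem induction {motive : SGame → Prop}
    (mk : ∀ L R s, (∀ x ∈ L, motive x) → (∀ x ∈ R, motive x) → motive (mk L R s)) :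
    ∀ G, motive G
  | .mk L R s =>
    mk L R s (fun x _ => induction mk x) (fun x _ => induction mk x)
termination_by G => sizeOf G
decreasing_by
  all_goals (have := List.sizeOf_lt_of_mem ‹x ∈ _›; simp; omega)

lemma mk_sum (L R : List SGame) (s : ℝ) (X : SGame) :
    (mk L R s).sum X =
      mk (L.map (·.sum X) ++ X.leftOpts.map ((mk L R s).sum ·))
        (R.map (·.sum X) ++ X.rightOpts.map ((mk L R s).sum ·)) (s + X.score) := by
  cases X
  rw [sum]
  simp [leftOpts, rightOpts, score]

lemma rightScore_mk_nil (L : List SGame) (s : ℝ) : rightScore (mk L [] s) = s := by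
  rw [rightScore]

lemma rightScore_le_maxRight {g x : SGame} {l : List SGame} (hx : x ∈ g :: l) :
    rightScore x ≤ maxRight g l := by
  induction l generalizing g with
  | nil => rw [maxRight, List.mem_singleton.mp hx]
  | cons h t ih =>
    rw [maxRight]
    rcases List.mem_cons.mp hx with rfl | hx
    · exact le_max_left _ _
    · exact (ih hx).trans (le_max_right _ _)

lemma exists_maxRight_eq (g : SGame) (l : List SGame) :
    ∃ x ∈ g :: l, maxRight g l = rightScore x := by
  induction l generalizing g with
  | nil => exact ⟨g, List.mem_singleton_self g, by rw [maxRight]⟩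
  | cons h t ih =>
    rw [maxRight]
    obtain ⟨x, hx, hmax⟩ := ih h
    rcases max_choice (rightScore g) (maxRight h t) with hg | hh
    · exact ⟨g, List.mem_cons_self, hg⟩
    · exact ⟨x, List.mem_cons_of_mem g hx, hh.trans hmax⟩

lemma minLeft_le_leftScore {g x : SGame} {l : List SGame} (hx : x ∈ g :: l) :
    minLeft g l ≤ leftScore x := by
  induction l generalizing g with
  | nil => rw [minLeft, List.mem_singleton.mp hx]
  | cons h t ih =>
    rw [minLeft]
    rcases List.mem_cons.mp hx with rfl | hx
    · exact min_le_left _ _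
    · exact (min_le_right _ _).trans (ih hx)

lemma exists_minLeft_eq (g : SGame) (l : List SGame) :
    ∃ x ∈ g :: l, minLeft g l = leftScore x := by
  induction l generalizing g with
  | nil => exact ⟨g, List.mem_singleton_self g, by rw [minLeft]⟩
  | cons h t ih =>
    rw [minLeft]
    obtain ⟨x, hx, hmin⟩ := ih h
    rcases min_choice (leftScore g) (minLeft h t) with hg | hh
    · exact ⟨g, List.mem_cons_self, hg⟩
    · exact ⟨x, List.mem_cons_of_mem g hx, hh.trans hmin⟩

lemma sign_leftScore_le_of_forall_exists {L L' R R' : List SGame} {s s' : ℝ} (hL : L ≠ [])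
    (h : ∀ x ∈ L, ∃ y ∈ L', sign x.rightScore ≤ sign y.rightScore) :
    sign (mk L R s).leftScore ≤ sign (mk L' R' s').leftScore := by
  obtain ⟨g, l, rfl⟩ := List.exists_cons_of_ne_nil hL
  obtain ⟨x, hx, hmax⟩ := exists_maxRight_eq g l
  obtain ⟨y, hy, hxy⟩ := h x hx
  obtain ⟨g', l', rfl⟩ := List.exists_cons_of_ne_nil (List.ne_nil_of_mem hy)
  rw [leftScore, leftScore, hmax]
  exact hxy.trans (sign.monotone (rightScore_le_maxRight hy))

lemma sign_rightScore_le_of_forall_exists {L L' R R' : List SGame} {s s' : ℝ} (hR : R' ≠ [])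
    (h : ∀ y ∈ R', ∃ x ∈ R, sign x.leftScore ≤ sign y.leftScore) :
    sign (mk L R s).rightScore ≤ sign (mk L' R' s').rightScore := by
  obtain ⟨g', l', rfl⟩ := List.exists_cons_of_ne_nil hR
  obtain ⟨y, hy, hmin⟩ := exists_minLeft_eq g' l'
  obtain ⟨x, hx, hxy⟩ := h y hy
  obtain ⟨g, l, rfl⟩ := List.exists_cons_of_ne_nil (List.ne_nil_of_mem hx)
  rw [rightScore, rightScore, hmin]
  exact (sign.monotone (minLeft_le_leftScore hx)).trans hxy

lemma ge_iff_sign_le {G H : SGame} :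
    Ge G H ↔ ∀ X, sign (H.sum X).leftScore ≤ sign (G.sum X).leftScore ∧
      sign (H.sum X).rightScore ≤ sign (G.sum X).rightScore := by
  simp only [Ge, sign_le_sign_iff]
  exact forall_congr' fun X => by tauto

lemma outcome_eq_of_sign_eq {G H : SGame} (hl : sign G.leftScore = sign H.leftScore)
    (hr : sign G.rightScore = sign H.rightScore) : G.outcome = H.outcome := by
  unfold outcome
  simp only [← sign_eq_one_iff (a := G.leftScore), ← sign_eq_one_iff (a := G.rightScore),
    ← sign_eq_zero_iff (a := G.leftScore), ← sign_eq_zero_iff (a := G.rightScore),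
    ← sign_eq_one_iff (a := H.leftScore), ← sign_eq_one_iff (a := H.rightScore),
    ← sign_eq_zero_iff (a := H.leftScore), ← sign_eq_zero_iff (a := H.rightScore), hl, hr]

lemma gameEq_of_ge_of_ge {G H : SGame} (hGH : Ge G H) (hHG : Ge H G) : gameEq G H := by
  rw [ge_iff_sign_le] at hGH hHG
  intro X
  exact outcome_eq_of_sign_eq (le_antisymm (hHG X).1 (hGH X).1)
    (le_antisymm (hHG X).2 (hGH X).2)

lemma ge_refl (G : SGame) : Ge G G := fun _ => ⟨id, id, id, id⟩

theorem ge_mk_of_forall_exists_ge {L L' R : List SGame} {s : ℝ} (hnil : L = [] → L' = [])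
    (h : ∀ a ∈ L, ∃ b ∈ L', Ge b a) : Ge (mk L' R s) (mk L R s) := by
  rw [ge_iff_sign_le]
  intro X
  induction X with
  | mk XL XR t ihL ihR =>
  rw [mk_sum, mk_sum]
  simp only [leftOpts, rightOpts, score]
  constructor
  · by_cases hXnil : L = [] ∧ XL = []
    · obtain ⟨rfl, rfl⟩ := hXnil
      rw [hnil rfl]
    apply sign_leftScore_le_of_forall_exists (by simpa [not_and_or] using hXnil)
    intro y hy
    rcases List.mem_append.mp hy with hy | hy
    · obtain ⟨a, ha, rfl⟩ := List.mem_map.mp hy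
      obtain ⟨b, hb, hba⟩ := h a ha
      exact ⟨b.sum _, List.mem_append_left _ (List.mem_map_of_mem hb),
        (ge_iff_sign_le.mp hba _).2⟩
    · obtain ⟨x, hx, rfl⟩ := List.mem_map.mp hy
      exact ⟨_, List.mem_append_right _ (List.mem_map_of_mem hx), (ihL x hx).2⟩
  · by_cases hXnil : R = [] ∧ XR = []
    · obtain ⟨rfl, rfl⟩ := hXnil
      simp only [List.map_nil, List.append_nil, rightScore_mk_nil, le_refl]
    apply sign_rightScore_le_of_forall_exists (by simpa [not_and_or] using hXnil)
    intro y hy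
    rcases List.mem_append.mp hy with hy | hy
    · exact ⟨y, List.mem_append_left _ hy, le_rfl⟩
    · obtain ⟨x, hx, rfl⟩ := List.mem_map.mp hy
      exact ⟨_, List.mem_append_right _ (List.mem_map_of_mem hx), (ihR x hx).1⟩

end SGame

/-- Removing a dominated Left option preserves equality: if `A ≥ B` then
`{A, C, … | s | D, E, F, …} = {A, B, C, … | s | D, E, F, …}`. -/
theorem remove_dominated_left (A B : SGame) (Lrest R : List SGame) (s : ℝ)
    (h : SGame.Ge A B) :
    SGame.gameEq (SGame.mk (A :: Lrest) R s) (SGame.mk (A :: B :: Lrest) R s) := by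
  refine SGame.gameEq_of_ge_of_ge ?_ ?_
  · refine SGame.ge_mk_of_forall_exists_ge (fun h => (List.cons_ne_nil _ _ h).elim) ?_
    rintro b (_ | ⟨_, _ | ⟨_, hb⟩⟩)
    · exact ⟨A, List.mem_cons_self, SGame.ge_refl A⟩
    · exact ⟨A, List.mem_cons_self, h⟩
    · exact ⟨b, List.mem_cons_of_mem A hb, SGame.ge_refl b⟩
  · refine SGame.ge_mk_of_forall_exists_ge (fun h => (List.cons_ne_nil _ _ h).elim) ?_
    exact fun a ha =>
      ⟨a, List.cons_subset_cons A (List.subset_cons_self B Lrest) ha, SGame.ge_refl a⟩
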